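/- arXiv:2109.01472 — 4 statements merged into one kernel-verified Lean document; each statement's English description precedes it below -/
import Mathlib

section
/- For every partition p of 2n with empty 2-core, there exists a D-partition q of 2n with q ≤ p in the dominance order; moreover there is a unique maximal such q, the D-collapse of p. -/
open scoped Classical

/-- Two cells of a Young diagram are adjacent (horizontally or vertically). -/
def Adj (c d : ℕ × ℕ) : Prop :=
  (c.1 = d.1 ∧ (c.2 + 1 = d.2 ∨ d.2 + 1 = c.2)) ∨
  (c.2 = d.2 ∧ (c.1 + 1 = d.1 ∨ d.1 + 1 = c.1))

/-- `c = (i, j)` is a cell of the Young diagram with row lengths `l`. -/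
def Cell (l : List ℕ) (c : ℕ × ℕ) : Prop := c.2 < l.getD c.1 0

/-- A standard domino tableau with `n` dominoes: a shape (weakly decreasing list of
positive row lengths summing to `2n`) together with a labelling of its cells such that
each label `k ∈ {1,…,n}` occupies exactly two adjacent cells and the cells with labels
`≤ k` always form a Young diagram (a lower set). -/
structure SDT (n : ℕ) where
  shape : List ℕ
  sorted : shape.Pairwise (· ≥ ·)
  pos : ∀ x ∈ shape, 0 < x
  sum_eq : shape.sum = 2 * n
  label : ℕ × ℕ → ℕ
  dominoes : ∀ k, 1 ≤ k → k ≤ n →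
    ∃ c d : ℕ × ℕ, c ≠ d ∧ Adj c d ∧
      ∀ x, (Cell shape x ∧ label x = k) ↔ (x = c ∨ x = d)
  lower : ∀ k, IsLowerSet {x : ℕ × ℕ | Cell shape x ∧ label x ≤ k}

/-- The number of vertical dominoes of a standard domino tableau. -/
noncomputable def nVert {n : ℕ} (T : SDT n) : ℕ :=
  ((Finset.Icc 1 n).filter (fun k =>
    ∃ i j : ℕ, Cell T.shape (i + 1, j) ∧ T.label (i, j) = k ∧ T.label (i + 1, j) = k)).card

/-- The parts of a partition as a weakly decreasing list. -/
def partList {N : ℕ} (p : N.Partition) : List ℕ := (p.parts.sort (· ≤ ·)).reverse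

/-- The Young diagram with row lengths `l` admits a tiling by dominoes:
an adjacent-fixed-point-free pairing of its cells (empty 2-core). -/
def HasTiling (l : List ℕ) : Prop :=
  ∃ t : ℕ × ℕ → ℕ × ℕ, ∀ c, Cell l c →
    Cell l (t c) ∧ t (t c) = c ∧ t c ≠ c ∧ Adj c (t c)

/-- A D-partition: every even part occurs with even multiplicity. -/
def IsDPartition {N : ℕ} (p : N.Partition) : Prop :=
  ∀ m ∈ p.parts, Even m → Even (p.parts.count m)

/-- Dominance order: `p ≤ q` iff every partial sum of the parts of `p` (in decreasing order)
is at most the corresponding partial sum for `q`. -/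
def DomLE {N : ℕ} (p q : N.Partition) : Prop :=
  ∀ k, ((partList p).take k).sum ≤ ((partList q).take k).sum


/-!
Encode a partition by its excess function `m ↦ ∑ᵢ (qᵢ - m)`, the number of cells to the right
of column `m`. By a Legendre-type duality between partial sums of the sorted parts and the excess,
`q ≤ p` in dominance order iff the excess of `q` is pointwise at most that of `p`. Excess functions
determine the partition and are exactly the antitone, discretely convex functions `ℕ → ℕ` that
vanish eventually; this class is closed under pointwise `max`, so any two partitions of `N` have
a join for dominance. The second difference of the excess at `m + 1` is the multiplicity of the
part `m + 1`, so D-partitions are those whose excess is even at every odd `m`, and this too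
survives `max`. The D-partitions dominated by `p` thus form a finite family, containing `1^N`,
that is closed under joins, hence it has a greatest element.
-/

lemma Antitone.lt_card_filter_range_iff {c : ℕ → ℕ} (hc : Antitone c) {B : ℕ}
    (hB : ∀ j, B ≤ j → c j = 0) (i m : ℕ) :
    m < ((Finset.range B).filter (i < c ·)).card ↔ i < c m := by
  constructor
  · intro hm
    by_contra! him
    have : (Finset.range B).filter (i < c ·) ⊆ Finset.range m := fun j hj => by
      simp only [Finset.mem_filter, Finset.mem_range] at hj ⊢
      by_contra! hjm
      exact absurd (lt_of_lt_of_le hj.2 (hc hjm)) (not_lt.2 him)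
    exact absurd (Finset.card_le_card this) (by simpa using hm)
  · intro him
    have hmB : m < B := by
      by_contra! hBm
      rw [hB m hBm] at him
      exact Nat.not_lt_zero _ him
    have : Finset.range (m + 1) ⊆ (Finset.range B).filter (i < c ·) := fun j hj => by
      simp only [Finset.mem_filter, Finset.mem_range] at hj ⊢
      exact ⟨by omega, lt_of_lt_of_le him (hc (by omega))⟩
    simpa using Finset.card_le_card this

namespace Multiset

def excess (s : Multiset ℕ) (m : ℕ) : ℕ := (s.map (· - m)).sum

@[simp] lemma excess_zero (m : ℕ) : (0 : Multiset ℕ).excess m = 0 := rfl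

@[simp] lemma excess_cons (a : ℕ) (s : Multiset ℕ) (m : ℕ) :
    (a ::ₘ s).excess m = (a - m) + s.excess m := by
  simp [excess]

variable (s : Multiset ℕ)

lemma excess_zero_right : s.excess 0 = s.sum := by simp [excess]

lemma excess_eq_zero {m : ℕ} (h : ∀ x ∈ s, x ≤ m) : s.excess m = 0 :=
  Multiset.sum_eq_zero fun y hy => by
    obtain ⟨x, hx, rfl⟩ := Multiset.mem_map.1 hy
    exact Nat.sub_eq_zero_of_le (h x hx)

lemma excess_eq_excess_succ_add_countP (m : ℕ) :
    s.excess m = s.excess (m + 1) + s.countP (m < ·) := by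
  induction s using Multiset.induction_on with
  | empty => simp
  | cons a s ih => simp only [excess_cons, countP_cons, ih]; split <;> omega

lemma countP_lt_eq_count_succ_add (m : ℕ) :
    s.countP (m < ·) = s.count (m + 1) + s.countP (m + 1 < ·) := by
  induction s using Multiset.induction_on with
  | empty => simp
  | cons a s ih => simp only [countP_cons, count_cons, ih]; split_ifs <;> omega

lemma excess_eq_excess_add_two (m : ℕ) :
    s.excess m = s.excess (m + 2) + 2 * s.countP (m + 1 < ·) + s.count (m + 1) := by
  rw [excess_eq_excess_succ_add_countP s m, excess_eq_excess_succ_add_countP s (m + 1),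
    countP_lt_eq_count_succ_add s m]
  ring

lemma excess_antitone : Antitone s.excess :=
  antitone_nat_of_succ_le fun m => by rw [excess_eq_excess_succ_add_countP s m]; omega

lemma excess_succ_add_excess_succ_le (m : ℕ) :
    s.excess (m + 1) + s.excess (m + 1) ≤ s.excess m + s.excess (m + 2) := by
  have := excess_eq_excess_succ_add_countP s m
  have := excess_eq_excess_add_two s m
  have := countP_lt_eq_count_succ_add s m
  omega

lemma eq_of_excess_eq {s t : Multiset ℕ} (hs : 0 ∉ s) (ht : 0 ∉ t)
    (h : s.excess = t.excess) : s = t := by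
  have hcountP (m : ℕ) : s.countP (m < ·) = t.countP (m < ·) := by
    have := excess_eq_excess_succ_add_countP s m
    have := excess_eq_excess_succ_add_countP t m
    rw [h] at *
    omega
  ext a
  cases a with
  | zero => rw [count_eq_zero.2 hs, count_eq_zero.2 ht]
  | succ m =>
    have := countP_lt_eq_count_succ_add s m
    have := countP_lt_eq_count_succ_add t m
    rw [hcountP, hcountP] at *
    omega


theorem exists_excess_eq {g : ℕ → ℕ} (hg : Antitone g)
    (hconv : ∀ m, g (m + 1) + g (m + 1) ≤ g m + g (m + 2)) {B : ℕ} (hB : g B = 0) :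
    ∃ s : Multiset ℕ, 0 ∉ s ∧ ∀ m, s.excess m = g m := by
  have hgB : ∀ m, B ≤ m → g m = 0 := fun m hm => Nat.eq_zero_of_le_zero (hB ▸ hg hm)
  set c : ℕ → ℕ := fun m => g m - g (m + 1)
  have hc : Antitone c := antitone_nat_of_succ_le fun m => by
    show g (m + 1) - g (m + 2) ≤ g m - g (m + 1)
    have := hconv m
    have := hg (Nat.le_succ m)
    omega
  have hcB : ∀ m, B ≤ m → c m = 0 := fun m hm => by simp [c, hgB m hm, hgB (m + 1) (by omega)]
  -- `s` is the conjugate of the partition with column lengths `c`.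
  set s := (range (c 0)).map fun i => ((Finset.range B).filter (i < c ·)).card
  have hcountP (m : ℕ) : s.countP (m < ·) = c m := by
    have hfilter : (Finset.range (c 0)).filter (· < c m) = Finset.range (c m) := by
      ext i
      simpa using fun hi => lt_of_lt_of_le hi (hc (Nat.zero_le m))
    simp only [s, countP_map, hc.lt_card_filter_range_iff hcB]
    rw [← Finset.range_val, ← Finset.filter_val, Finset.card_val, hfilter, Finset.card_range]
  refine ⟨s, fun h0 => ?_, fun m => ?_⟩
  · obtain ⟨i, hi, hi0⟩ := mem_map.1 h0
    rw [mem_range, ← hc.lt_card_filter_range_iff hcB, hi0] at hi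
    exact Nat.lt_irrefl 0 hi
  · have hle (x : ℕ) (hx : x ∈ s) : x ≤ B := by
      have := countP_eq_zero.1 ((hcountP B).trans (hcB B le_rfl)) x hx
      omega
    have hdown (d : ℕ) : ∀ m, B ≤ m + d → s.excess m = g m := by
      induction d with
      | zero =>
        intro m (hm : B ≤ m)
        rw [excess_eq_zero s fun x hx => (hle x hx).trans hm, hgB m hm]
      | succ d ih =>
        intro m hm
        rw [excess_eq_excess_succ_add_countP, hcountP, ih (m + 1) (by omega)]
        have : g (m + 1) ≤ g m := hg (Nat.le_add_right m 1)
        have : c m = g m - g (m + 1) := rfl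
        omega
    exact hdown B m (by omega)

end Multiset

namespace List

lemma sum_take_le_excess_add (a : List ℕ) (k m : ℕ) :
    (a.take k).sum ≤ (a : Multiset ℕ).excess m + k * m := by
  induction a generalizing k with
  | nil => simp
  | cons x t ih =>
    cases k with
    | zero => simp
    | succ k =>
      have := ih k
      rw [← Multiset.cons_coe, Multiset.excess_cons, take_succ_cons, sum_cons, Nat.succ_mul]
      omega

lemma excess_getD_add_le_sum_take {a : List ℕ} (ha : a.Pairwise (· ≥ ·)) (k : ℕ) :
    (a : Multiset ℕ).excess (a.getD k 0) + k * a.getD k 0 ≤ (a.take k).sum := by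
  induction a generalizing k with
  | nil => simp
  | cons x t ih =>
    rw [pairwise_cons] at ha
    rw [← Multiset.cons_coe, Multiset.excess_cons]
    cases k with
    | zero =>
      have : (t : Multiset ℕ).excess x = 0 := Multiset.excess_eq_zero _ ha.1
      simp [this]
    | succ k =>
      have hle : t.getD k 0 ≤ x := by
        rw [getD_eq_getElem?_getD]
        cases h : t[k]? with
        | none => exact Nat.zero_le x
        | some y => exact ha.1 y (mem_of_getElem? h)
      have := ih ha.2 k
      rw [getD_cons_succ, take_succ_cons, sum_cons, Nat.succ_mul]
      omega

lemma exists_sum_take_eq_excess_add {a : List ℕ} (ha : a.Pairwise (· ≥ ·)) (m : ℕ) :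
    ∃ k, (a.take k).sum = (a : Multiset ℕ).excess m + k * m := by
  induction a with
  | nil => exact ⟨0, by simp⟩
  | cons x t ih =>
    rw [pairwise_cons] at ha
    by_cases hxm : x ≤ m
    · have : (t : Multiset ℕ).excess m = 0 :=
        Multiset.excess_eq_zero _ fun y hy => (ha.1 y hy).trans hxm
      exact ⟨0, by simp [← Multiset.cons_coe, this, hxm]⟩
    · obtain ⟨k, hk⟩ := ih ha.2
      refine ⟨k + 1, ?_⟩
      rw [← Multiset.cons_coe, Multiset.excess_cons, take_succ_cons, sum_cons, hk, Nat.succ_mul]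
      omega

end List

namespace Nat.Partition

variable {N : ℕ}

lemma zero_notMem_parts (p : N.Partition) : 0 ∉ p.parts := fun h => (p.parts_pos h).false

lemma excess_parts_zero (p : N.Partition) : p.parts.excess 0 = N := by
  rw [Multiset.excess_zero_right, p.parts_sum]

lemma excess_parts_eq_zero (p : N.Partition) {m : ℕ} (h : N ≤ m) : p.parts.excess m = 0 :=
  p.parts.excess_eq_zero fun _ hx => (le_of_mem_parts hx).trans h

lemma ext_excess {q r : N.Partition} (h : ∀ m, q.parts.excess m = r.parts.excess m) : q = r :=
  Partition.ext (Multiset.eq_of_excess_eq q.zero_notMem_parts r.zero_notMem_parts (funext h))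

lemma coe_partList (p : N.Partition) : (partList p : Multiset ℕ) = p.parts := by
  rw [partList, Multiset.coe_reverse, Multiset.sort_eq]

lemma pairwise_partList (p : N.Partition) : (partList p).Pairwise (· ≥ ·) :=
  List.pairwise_reverse.2 (Multiset.pairwise_sort _ _)

end Nat.Partition

open Nat.Partition

variable {N : ℕ}

theorem domLE_iff_excess_le {q p : N.Partition} :
    DomLE q p ↔ ∀ m, q.parts.excess m ≤ p.parts.excess m := by
  constructor
  · intro h m
    obtain ⟨k, hk⟩ := List.exists_sum_take_eq_excess_add (pairwise_partList q) m
    have := (partList p).sum_take_le_excess_add k m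
    have := h k
    rw [coe_partList] at *
    omega
  · intro h k
    have := (partList q).sum_take_le_excess_add k ((partList p).getD k 0)
    have := List.excess_getD_add_le_sum_take (pairwise_partList p) k
    have := h ((partList p).getD k 0)
    rw [coe_partList] at *
    omega

theorem DomLE.antisymm {q r : N.Partition} (hqr : DomLE q r) (hrq : DomLE r q) : q = r :=
  ext_excess fun m => le_antisymm (domLE_iff_excess_le.1 hqr m) (domLE_iff_excess_le.1 hrq m)

theorem isDPartition_iff_even_excess (q : N.Partition) :
    IsDPartition q ↔ ∀ k, Odd k → Even (q.parts.excess k) := by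
  constructor
  · intro hD
    have hcount (k : ℕ) (hk : Odd k) : Even (q.parts.count (k + 1)) := by
      by_cases hmem : k + 1 ∈ q.parts
      · exact hD _ hmem hk.add_one
      · simp [Multiset.count_eq_zero.2 hmem]
    have hdown (d : ℕ) : ∀ k, Odd k → N ≤ k + 2 * d → Even (q.parts.excess k) := by
      induction d with
      | zero => exact fun k _ (hk : N ≤ k) => q.excess_parts_eq_zero hk ▸ Even.zero
      | succ d ih =>
        intro k hk hkd
        rw [q.parts.excess_eq_excess_add_two k]
        exact ((ih (k + 2) (hk.add_even even_two) (by omega)).add (even_two_mul _)).add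
          (hcount k hk)
    exact fun k hk => hdown N k hk (by omega)
  · intro h m hm hm_even
    obtain ⟨k, rfl⟩ := Nat.exists_eq_add_one.2 (q.parts_pos hm)
    have hk : Odd k := Nat.not_even_iff_odd.1 (Nat.even_add_one.1 hm_even)
    have hsum := h k hk
    rw [q.parts.excess_eq_excess_add_two k] at hsum
    exact (Nat.even_add.1 hsum).1
      ((h (k + 2) (hk.add_even even_two)).add (even_two_mul _))

namespace Nat.Partition

theorem exists_excess_eq_max (q r : N.Partition) :
    ∃ J : N.Partition, ∀ m, J.parts.excess m = max (q.parts.excess m) (r.parts.excess m) := by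
  obtain ⟨s, hs0, hs⟩ :=
    Multiset.exists_excess_eq (g := fun m => max (q.parts.excess m) (r.parts.excess m))
    (fun a b hab => max_le_max (q.parts.excess_antitone hab) (r.parts.excess_antitone hab))
    (fun m => by
      have := q.parts.excess_succ_add_excess_succ_le m
      have := r.parts.excess_succ_add_excess_succ_le m
      omega)
    (B := N) (by simp [excess_parts_eq_zero])
  refine ⟨⟨s, fun hx => Nat.pos_of_ne_zero (fun h => hs0 (h ▸ hx)), ?_⟩, hs⟩
  rw [← Multiset.excess_zero_right, hs, excess_parts_zero, excess_parts_zero, max_self]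

noncomputable def domSup (q r : N.Partition) : N.Partition := (exists_excess_eq_max q r).choose

lemma excess_domSup (q r : N.Partition) (m : ℕ) :
    (q.domSup r).parts.excess m = max (q.parts.excess m) (r.parts.excess m) :=
  (exists_excess_eq_max q r).choose_spec m

def ones (N : ℕ) : N.Partition := ofComposition N (Composition.ones N)

end Nat.Partition

lemma domLE_domSup_left (q r : N.Partition) : DomLE q (q.domSup r) :=
  domLE_iff_excess_le.2 fun m => (excess_domSup q r m).symm ▸ le_max_left _ _

lemma domLE_domSup_right (q r : N.Partition) : DomLE r (q.domSup r) :=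
  domLE_iff_excess_le.2 fun m => (excess_domSup q r m).symm ▸ le_max_right _ _

lemma DomLE.domSup_le {q r p : N.Partition} (hq : DomLE q p) (hr : DomLE r p) :
    DomLE (q.domSup r) p :=
  domLE_iff_excess_le.2 fun m => (excess_domSup q r m).symm ▸
    max_le (domLE_iff_excess_le.1 hq m) (domLE_iff_excess_le.1 hr m)

lemma IsDPartition.domSup {q r : N.Partition} (hq : IsDPartition q) (hr : IsDPartition r) :
    IsDPartition (q.domSup r) := by
  rw [isDPartition_iff_even_excess] at *
  intro k hk
  rw [excess_domSup]
  rcases max_choice (q.parts.excess k) (r.parts.excess k) with h | h <;> rw [h]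
  exacts [hq k hk, hr k hk]

lemma parts_ones : (ones N).parts = Multiset.replicate N 1 := by
  simp [ones, Multiset.coe_replicate]

lemma isDPartition_ones : IsDPartition (ones N) := by
  intro m hm hm_even
  rw [parts_ones, Multiset.eq_of_mem_replicate hm] at *
  exact absurd hm_even Nat.not_even_one

lemma ones_domLE (p : N.Partition) : DomLE (ones N) p := by
  refine domLE_iff_excess_le.2 fun m => ?_
  cases m with
  | zero => rw [excess_parts_zero, excess_parts_zero]
  | succ m =>
    rw [(ones N).parts.excess_eq_zero fun x hx => by
      rw [parts_ones] at hx
      rw [Multiset.eq_of_mem_replicate hx]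
      omega]
    exact Nat.zero_le _

lemma eq_of_domLE_of_sum_excess_le {q r : N.Partition} (hqr : DomLE q r)
    (hsum : ∑ m ∈ Finset.range N, r.parts.excess m ≤ ∑ m ∈ Finset.range N, q.parts.excess m) :
    q = r := by
  have hle := domLE_iff_excess_le.1 hqr
  have heq := (Finset.sum_eq_sum_iff_of_le fun m _ => hle m).1
    (le_antisymm (Finset.sum_le_sum fun m _ => hle m) hsum)
  refine ext_excess fun m => ?_
  by_cases hm : m < N
  · exact heq m (Finset.mem_range.2 hm)
  · rw [q.excess_parts_eq_zero (not_lt.1 hm), r.excess_parts_eq_zero (not_lt.1 hm)]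

theorem exists_greatest_isDPartition_domLE (p : N.Partition) :
    ∃ q : N.Partition, IsDPartition q ∧ DomLE q p ∧
      ∀ r : N.Partition, IsDPartition r → DomLE r p → DomLE r q := by
  set S := Finset.univ.filter fun q : N.Partition => IsDPartition q ∧ DomLE q p
  -- Joining a maximizer of the total excess with `r ∈ S` stays in `S` and can only raise the
  -- excess pointwise, so the join is the maximizer itself.
  obtain ⟨q, hqS, hq_max⟩ :=
    S.exists_max_image (fun q => ∑ m ∈ Finset.range N, q.parts.excess m)
      ⟨ones N, by simp [S, isDPartition_ones, ones_domLE]⟩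
  simp only [S, Finset.mem_filter, Finset.mem_univ, true_and] at hqS hq_max
  refine ⟨q, hqS.1, hqS.2, fun r hrD hrp => ?_⟩
  have hq_eq : q = q.domSup r := eq_of_domLE_of_sum_excess_le (domLE_domSup_left q r)
    (hq_max _ ⟨hqS.1.domSup hrD, hqS.2.domSup_le hrp⟩)
  exact hq_eq ▸ domLE_domSup_right q r

theorem exists_unique_D_collapse_general (n : ℕ) (p : (2 * n).Partition) :
    ∃! q : (2 * n).Partition, IsDPartition q ∧ DomLE q p ∧
      ∀ r : (2 * n).Partition, IsDPartition r → DomLE r p → DomLE r q := by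
  obtain ⟨q, hqD, hqp, hq_max⟩ := exists_greatest_isDPartition_domLE p
  exact ⟨q, ⟨hqD, hqp, hq_max⟩,
    fun q' ⟨hD, hp, hmax⟩ => (hq_max q' hD hp).antisymm (hmax q hqD hqp)⟩

/-- For every partition `p` of `2n` with empty 2-core there exists a D-partition
`q` of `2n` with `q ≤ p` in dominance order; moreover there is a unique maximal such `q`,
the D-collapse of `p`. -/
theorem exists_unique_D_collapse (n : ℕ) (p : (2 * n).Partition)
    (hcore : HasTiling (partList p)) :
    ∃! q : (2 * n).Partition, IsDPartition q ∧ DomLE q p ∧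
      ∀ r : (2 * n).Partition, IsDPartition r → DomLE r p → DomLE r q :=
  exists_unique_D_collapse_general n p
end

section
/- The Young diagram of a partition p admits a tiling by dominoes if and only if the number of cells (i,j) of p with i + j even equals the number of cells with i + j odd. -/
open scoped Classical

/-- The finset of cells of the Young diagram with row lengths `l`. -/
noncomputable def cellsFinset (l : List ℕ) : Finset (ℕ × ℕ) :=
  ((Finset.range l.length) ×ˢ (Finset.range (l.foldr max 0))).filter (fun c => Cell l c)

/-!
Adjacent cells have opposite colours, so a tiling pairs off the even cells with the odd ones.
Conversely, a nonempty Young diagram either has a domino on its rim whose removal leaves a Young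
diagram (a horizontal one at the end of a row that exceeds the next row by at least two, or a
vertical one at the end of two equal rows followed by a shorter row), or it is a staircase
`(k, k - 1, …, 1)`, whose colour counts differ by `⌈k / 2⌉`. Removing a domino keeps the diagram
balanced, so induction on the number of cells tiles every balanced diagram.
-/

open Finset

lemma Adj.symm {c d : ℕ × ℕ} (h : Adj c d) : Adj d c := by
  unfold Adj at *; omega

lemma Adj.ne {c d : ℕ × ℕ} (h : Adj c d) : c ≠ d := by
  rintro rfl; unfold Adj at h; omega

lemma Adj.neg_one_pow_add_neg_one_pow {c d : ℕ × ℕ} (h : Adj c d) :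
    (-1 : ℤ) ^ (c.1 + c.2) + (-1) ^ (d.1 + d.2) = 0 := by
  obtain e | e : d.1 + d.2 = c.1 + c.2 + 1 ∨ c.1 + c.2 = d.1 + d.2 + 1 := by
    unfold Adj at h; omega
  all_goals rw [e, pow_succ]; ring

def IsDominoTiling (S : Set (ℕ × ℕ)) (t : ℕ × ℕ → ℕ × ℕ) : Prop :=
  ∀ c ∈ S, t c ∈ S ∧ t (t c) = c ∧ t c ≠ c ∧ Adj c (t c)

def signedCount (S : Finset (ℕ × ℕ)) : ℤ := ∑ c ∈ S, (-1) ^ (c.1 + c.2)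

lemma signedCount_eq_sub (S : Finset (ℕ × ℕ)) :
    signedCount S = #{c ∈ S | Even (c.1 + c.2)} - #{c ∈ S | Odd (c.1 + c.2)} := by
  rw [signedCount, ← sum_filter_add_sum_filter_not S (fun c => Even (c.1 + c.2))]
  simp only [Nat.not_even_iff_odd]
  have heven : ∑ c ∈ S with Even (c.1 + c.2), (-1 : ℤ) ^ (c.1 + c.2) =
      ∑ c ∈ S with Even (c.1 + c.2), 1 :=
    sum_congr rfl fun c hc => (mem_filter.1 hc).2.neg_one_pow
  have hodd : ∑ c ∈ S with Odd (c.1 + c.2), (-1 : ℤ) ^ (c.1 + c.2) =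
      ∑ c ∈ S with Odd (c.1 + c.2), -1 :=
    sum_congr rfl fun c hc => (mem_filter.1 hc).2.neg_one_pow
  simp [heven, hodd, sub_eq_add_neg]

lemma IsDominoTiling.signedCount_eq_zero {S : Finset (ℕ × ℕ)} {t : ℕ × ℕ → ℕ × ℕ}
    (ht : IsDominoTiling S t) : signedCount S = 0 :=
  sum_involution (fun c _ => t c) (fun c hc => (ht c hc).2.2.2.neg_one_pow_add_neg_one_pow)
    (fun c hc _ => (ht c hc).2.2.1) (fun c hc => (ht c hc).1) (fun c hc => (ht c hc).2.1)

lemma signedCount_sdiff_domino {S : Finset (ℕ × ℕ)} {c d : ℕ × ℕ} (hcd : Adj c d)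
    (hc : c ∈ S) (hd : d ∈ S) : signedCount (S \ {c, d}) = signedCount S := by
  rw [signedCount, signedCount, ← sum_sdiff (insert_subset hc (singleton_subset_iff.2 hd)),
    sum_pair hcd.ne, hcd.neg_one_pow_add_neg_one_pow, add_zero]

lemma IsDominoTiling.insert_domino {S : Set (ℕ × ℕ)} {c d : ℕ × ℕ} {t : ℕ × ℕ → ℕ × ℕ}
    (ht : IsDominoTiling (S \ {c, d}) t) (hcd : Adj c d) (hc : c ∈ S) (hd : d ∈ S) :
    IsDominoTiling S fun x => if x = c then d else if x = d then c else t x := by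
  intro x hx
  by_cases hxc : x = c
  · subst hxc; simp [hcd.ne.symm, hd, hcd]
  by_cases hxd : x = d
  · subst hxd; simp [hcd.ne, hc, hcd.symm, hcd.ne.symm]
  obtain ⟨htx, htt, hne, hadj⟩ := ht x ⟨hx, by simp [hxc, hxd]⟩
  obtain ⟨htxS, htx'⟩ := htx
  simp only [Set.mem_insert_iff, Set.mem_singleton_iff, not_or] at htx'
  simp [hxc, hxd, htx'.1, htx'.2, htxS, htt, hne, hadj]

lemma signedCount_ne_zero_of_staircase {S : Finset (ℕ × ℕ)} {k : ℕ} (hk : 0 < k)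
    (hS : ∀ c, c ∈ S ↔ c.1 + c.2 < k) : signedCount S ≠ 0 := by
  have hfiber : ∀ n ∈ range k, {c ∈ S | c.1 + c.2 = n} = antidiagonal n := by
    intro n hn
    ext c
    simp only [mem_filter, hS, HasAntidiagonal.mem_antidiagonal, mem_range] at hn ⊢
    omega
  have hsum : signedCount S = ∑ n ∈ range k, (-1) ^ n * (n + 1 : ℤ) := by
    rw [signedCount, ← sum_fiberwise_of_maps_to' (t := range k) (g := fun c => c.1 + c.2)
      (fun c hc => mem_range.2 ((hS c).1 hc))]
    refine sum_congr rfl fun n hn => ?_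
    rw [hfiber n hn, sum_const, Finset.Nat.card_antidiagonal]
    simp [mul_comm]
  have halt : ∀ m : ℕ, ∑ n ∈ range (2 * m), (-1) ^ n * (n + 1 : ℤ) = -m := by
    intro m
    induction m with
    | zero => simp
    | succ m ih =>
      rw [show 2 * (m + 1) = 2 * m + 1 + 1 by ring, sum_range_succ, sum_range_succ, ih]
      simp [pow_succ, pow_mul]
      ring
  rw [hsum]
  obtain ⟨m, rfl | rfl⟩ := Nat.even_or_odd' k
  · rw [halt]; omega
  · rw [sum_range_succ, halt]; simp [pow_succ, pow_mul]; omega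

lemma List.pairwise_ge_iff_antitone_getD (l : List ℕ) :
    l.Pairwise (· ≥ ·) ↔ Antitone (l.getD · 0) := by
  constructor
  · intro hl i j hij
    dsimp only
    by_cases hj : j < l.length
    · rw [List.getD_eq_getElem _ _ hj, List.getD_eq_getElem _ _ (hij.trans_lt hj)]
      rcases hij.lt_or_eq with hij | rfl
      · exact List.pairwise_iff_getElem.1 hl i j _ hj hij
      · rfl
    · rw [List.getD_eq_default _ _ (not_lt.1 hj)]
      exact Nat.zero_le _
  · intro hr
    refine List.pairwise_iff_getElem.2 fun i j hi hj hij => ?_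
    have := hr hij.le
    dsimp only at this
    rwa [List.getD_eq_getElem _ _ hi, List.getD_eq_getElem _ _ hj] at this

lemma List.exists_pairwise_ge_getD_eq {g : ℕ → ℕ} (hg : Antitone g) {n : ℕ} (hn : g n = 0) :
    ∃ l : List ℕ, l.Pairwise (· ≥ ·) ∧ ∀ i, l.getD i 0 = g i := by
  have hgetD : ∀ i, ((List.range n).map g).getD i 0 = g i := by
    intro i
    by_cases hi : i < n
    · rw [List.getD_eq_getElem _ _ (by simpa using hi)]
      simp
    · rw [List.getD_eq_default _ _ (by simpa using hi)]
      have := hg (not_lt.1 hi)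
      omega
  refine ⟨(List.range n).map g, ?_, hgetD⟩
  rw [List.pairwise_ge_iff_antitone_getD, funext hgetD]
  exact hg

lemma mem_cellsFinset {l : List ℕ} {c : ℕ × ℕ} : c ∈ cellsFinset l ↔ Cell l c := by
  refine ⟨fun h => (Finset.mem_filter.1 h).2, fun hc => ?_⟩
  have hlen : c.1 < l.length := by
    by_contra h
    rw [Cell, List.getD_eq_default _ _ (not_lt.1 h)] at hc
    omega
  refine Finset.mem_filter.2 ⟨Finset.mem_product.2 ⟨Finset.mem_range.2 hlen, ?_⟩, hc⟩
  rw [Cell, List.getD_eq_getElem _ _ hlen] at hc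
  exact Finset.mem_range.2 (List.le_max_of_le' 0 (List.getElem_mem hlen) hc)

def RemovesDomino (l l' : List ℕ) : Prop :=
  l'.Pairwise (· ≥ ·) ∧ ∃ c d, Adj c d ∧ Cell l c ∧ Cell l d ∧
    {x | Cell l' x} = {x | Cell l x} \ {c, d}

lemma exists_removesDomino_horizontal {l : List ℕ} (hl : l.Pairwise (· ≥ ·)) {i : ℕ}
    (hi : l.getD (i + 1) 0 + 2 ≤ l.getD i 0) : ∃ l', RemovesDomino l l' := by
  have hr := (List.pairwise_ge_iff_antitone_getD l).1 hl
  have hlen : i < l.length := by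
    by_contra h
    rw [List.getD_eq_default _ _ (not_lt.1 h)] at hi
    omega
  obtain ⟨l', hl', hgetD⟩ := List.exists_pairwise_ge_getD_eq
    (g := fun k => if k = i then l.getD i 0 - 2 else l.getD k 0) (n := l.length)
    (antitone_nat_of_succ_le fun k => by
      have := hr k.le_succ
      dsimp only at this ⊢
      split_ifs <;> grind)
    (by rw [if_neg hlen.ne', List.getD_eq_default _ _ le_rfl])
  refine ⟨l', hl', (i, l.getD i 0 - 2), (i, l.getD i 0 - 1), Or.inl ⟨rfl, Or.inl (by omega)⟩,
    show _ < _ by dsimp only; omega, show _ < _ by dsimp only; omega, ?_⟩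
  ext ⟨a, b⟩
  simp only [Set.mem_ofPred_eq, Set.mem_sdiff, Set.mem_insert_iff, Set.mem_singleton_iff,
    Cell, hgetD, Prod.mk.injEq]
  split_ifs <;> grind

lemma exists_removesDomino_vertical {l : List ℕ} (hl : l.Pairwise (· ≥ ·)) {i : ℕ}
    (heq : l.getD (i + 1) 0 = l.getD i 0) (hpos : 0 < l.getD i 0)
    (hlt : l.getD (i + 2) 0 < l.getD i 0) : ∃ l', RemovesDomino l l' := by
  have hr := (List.pairwise_ge_iff_antitone_getD l).1 hl
  have hlen : i + 1 < l.length := by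
    by_contra h
    rw [List.getD_eq_default _ _ (not_lt.1 h)] at heq
    omega
  obtain ⟨l', hl', hgetD⟩ := List.exists_pairwise_ge_getD_eq
    (g := fun k => if k = i ∨ k = i + 1 then l.getD i 0 - 1 else l.getD k 0) (n := l.length)
    (antitone_nat_of_succ_le fun k => by
      have := hr k.le_succ
      dsimp only at this ⊢
      split_ifs <;> grind)
    (by rw [if_neg (by omega), List.getD_eq_default _ _ le_rfl])
  refine ⟨l', hl', (i, l.getD i 0 - 1), (i + 1, l.getD i 0 - 1), Or.inr ⟨rfl, Or.inl rfl⟩,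
    show _ < _ by dsimp only; omega, show _ < _ by dsimp only; omega, ?_⟩
  ext ⟨a, b⟩
  simp only [Set.mem_ofPred_eq, Set.mem_sdiff, Set.mem_insert_iff, Set.mem_singleton_iff,
    Cell, hgetD, Prod.mk.injEq]
  split_ifs <;> grind

lemma Antitone.eq_sub_of_no_rim_domino {r : ℕ → ℕ} (hr : Antitone r) {n : ℕ} (hn : r n = 0)
    (hH : ∀ i, r i < r (i + 1) + 2)
    (hV : ∀ i, r (i + 1) = r i → 0 < r i → r i ≤ r (i + 2)) (i : ℕ) : r i = r 0 - i := by
  have plateau : ∀ i, r (i + 1) = r i → 0 < r i →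
      ∀ m, r (i + m) = r i ∧ r (i + m + 1) = r i := by
    intro i heq hpos m
    induction m with
    | zero => exact ⟨rfl, heq⟩
    | succ m ih =>
      have h1 : r (i + m) ≤ r (i + m + 1 + 1) :=
        hV (i + m) (ih.2.trans ih.1.symm) (ih.1 ▸ hpos)
      have h2 := hr (Nat.le_add_right (i + m + 1) 1)
      rw [← add_assoc]
      exact ⟨ih.2, by omega⟩
  have step : ∀ i, r (i + 1) = r i - 1 := by
    intro i
    by_contra hne
    have := hr (Nat.le_add_right i 1)
    have := hH i
    have := (plateau i (by omega) (by omega) n).1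
    have := hr (Nat.le_add_left n i)
    omega
  induction i with
  | zero => rfl
  | succ i ih => rw [step, ih]; omega

lemma exists_removesDomino_or_staircase {l : List ℕ} (hl : l.Pairwise (· ≥ ·)) :
    (∃ l', RemovesDomino l l') ∨ ∀ c, Cell l c ↔ c.1 + c.2 < l.getD 0 0 := by
  by_cases hH : ∃ i, l.getD (i + 1) 0 + 2 ≤ l.getD i 0
  · obtain ⟨i, hi⟩ := hH
    exact Or.inl (exists_removesDomino_horizontal hl hi)
  by_cases hV : ∃ i, l.getD (i + 1) 0 = l.getD i 0 ∧ 0 < l.getD i 0 ∧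
      l.getD (i + 2) 0 < l.getD i 0
  · obtain ⟨i, heq, hpos, hlt⟩ := hV
    exact Or.inl (exists_removesDomino_vertical hl heq hpos hlt)
  push Not at hH hV
  have hstair := ((List.pairwise_ge_iff_antitone_getD l).1 hl).eq_sub_of_no_rim_domino
    (List.getD_eq_default l 0 le_rfl) (fun i => by have := hH i; omega) hV
  refine Or.inr fun c => ?_
  rw [Cell, hstair]
  omega

lemma coe_cellsFinset (l : List ℕ) : (cellsFinset l : Set (ℕ × ℕ)) = {c | Cell l c} :=
  Set.ext fun _ => mem_cellsFinset

lemma HasTiling.signedCount_eq_zero {l : List ℕ} (h : HasTiling l) :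
    signedCount (cellsFinset l) = 0 := by
  obtain ⟨t, ht⟩ := h
  exact IsDominoTiling.signedCount_eq_zero (t := t) (by rwa [coe_cellsFinset])

theorem hasTiling_of_signedCount_eq_zero {l : List ℕ} (hl : l.Pairwise (· ≥ ·))
    (h : signedCount (cellsFinset l) = 0) : HasTiling l := by
  induction hn : #(cellsFinset l) using Nat.strong_induction_on generalizing l with
  | _ n ih =>
  rcases exists_removesDomino_or_staircase hl with ⟨l', hl', c, d, hcd, hc, hd, hcells⟩ | hstair
  · have hfin : cellsFinset l' = cellsFinset l \ {c, d} := by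
      ext x
      simpa [mem_cellsFinset] using Set.ext_iff.1 hcells x
    have hlt : #(cellsFinset l') < n := hn ▸ hfin ▸ card_lt_card (sdiff_ssubset
      (insert_subset (mem_cellsFinset.2 hc) (singleton_subset_iff.2 (mem_cellsFinset.2 hd)))
      (insert_nonempty _ _))
    obtain ⟨t, ht⟩ := ih _ hlt hl'
      (by rwa [hfin, signedCount_sdiff_domino hcd (mem_cellsFinset.2 hc) (mem_cellsFinset.2 hd)])
      rfl
    have ht' : IsDominoTiling ({x | Cell l x} \ {c, d}) t := hcells ▸ ht
    exact ⟨_, ht'.insert_domino hcd hc hd⟩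
  · have hempty : l.getD 0 0 = 0 := by
      by_contra hk
      exact signedCount_ne_zero_of_staircase (Nat.pos_of_ne_zero hk)
        (fun c => mem_cellsFinset.trans (hstair c)) h
    exact ⟨id, fun c hc => absurd ((hstair c).1 hc) (by omega)⟩

/-- The Young diagram of a partition admits a domino tiling if and only if the
number of its cells `(i, j)` with `i + j` even equals the number of cells with `i + j` odd. -/
theorem tileable_iff_balanced (N : ℕ) (p : N.Partition) :
    HasTiling (partList p) ↔
      ((cellsFinset (partList p)).filter (fun c => Even (c.1 + c.2))).card =
      ((cellsFinset (partList p)).filter (fun c => Odd (c.1 + c.2))).card := by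
  have hsorted : (partList p).Pairwise (· ≥ ·) := by
    rw [partList, List.pairwise_reverse]
    exact Multiset.pairwise_sort p.parts (· ≤ ·)
  rw [← @Nat.cast_inj ℤ, ← sub_eq_zero, ← signedCount_eq_sub]
  exact ⟨HasTiling.signedCount_eq_zero, hasTiling_of_signedCount_eq_zero hsorted⟩
end

section
/- A partition p of 2n in which every even part occurs with even multiplicity (a D-partition) has empty 2-core, i.e., its Young diagram can be tiled by dominoes. -/
open scoped Classical

/-!
Read the diagram row by row from the top, carrying at most one extra cell in column `0` just
above the current row, present exactly when the rows still to be read have odd total. An odd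
row `a` can always be read: its cells `1, …, a - 1` tile horizontally, and its first cell either
pairs vertically with the extra cell or becomes the extra cell for the rows below. Two equal
rows `a, a` can always be read: without an extra cell they form a `2 × a` block of vertical
dominoes; with one, the extra cell pairs with the first cell of the upper row, the first cell of
the lower row becomes the new extra cell, and columns `1, …, a - 1` form a `2 × (a - 1)` block.
In a weakly decreasing D-partition every even part is immediately followed by an equal one, so
the whole diagram is read by these two steps.
-/

open Set

def Tileable (S : Set (ℕ × ℕ)) : Prop :=
  ∃ t : ℕ × ℕ → ℕ × ℕ, ∀ c ∈ S, t c ∈ S ∧ t (t c) = c ∧ t c ≠ c ∧ Adj c (t c)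

theorem Tileable.union {S T : Set (ℕ × ℕ)} (hS : Tileable S) (hT : Tileable T)
    (hST : Disjoint S T) : Tileable (S ∪ T) := by
  obtain ⟨s, hs⟩ := hS
  obtain ⟨t, ht⟩ := hT
  refine ⟨fun c => if c ∈ S then s c else t c, ?_⟩
  rintro c (hc | hc)
  · obtain ⟨hsc, hss, hne, hadj⟩ := hs c hc
    simp only [if_pos hc, if_pos hsc]
    exact ⟨Or.inl hsc, hss, hne, hadj⟩
  · obtain ⟨htc, htt, hne, hadj⟩ := ht c hc
    simp only [if_neg (disjoint_right.1 hST hc), if_neg (disjoint_right.1 hST htc)]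
    exact ⟨Or.inr htc, htt, hne, hadj⟩

theorem exists_involution_Ico {j k : ℕ} (hjk : Even (k - j)) :
    ∃ f : ℕ → ℕ, ∀ y ∈ Ico j k, f y ∈ Ico j k ∧ f (f y) = y ∧ (y + 1 = f y ∨ f y + 1 = y) := by
  rw [Nat.even_iff] at hjk
  refine ⟨fun y => if (y - j) % 2 = 0 then y + 1 else y - 1, fun y hy => ?_⟩
  obtain ⟨hjy, hyk⟩ := hy
  by_cases hy : (y - j) % 2 = 0
  · have hy' : ¬ (y + 1 - j) % 2 = 0 := by omega
    simp only [hy, hy', if_true, if_false, mem_Ico, Nat.add_sub_cancel, true_or, and_true]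
    omega
  · have hy' : (y - 1 - j) % 2 = 0 := by omega
    simp only [hy, hy', if_true, if_false, mem_Ico]
    omega

theorem tileable_prod_Ico_of_even (A : Set ℕ) {j k : ℕ} (hjk : Even (k - j)) :
    Tileable (A ×ˢ Ico j k) := by
  obtain ⟨f, hf⟩ := exists_involution_Ico hjk
  refine ⟨fun c => (c.1, f c.2), fun c ⟨hA, hc⟩ => ?_⟩
  obtain ⟨hfc, hff, hadj⟩ := hf c.2 hc
  refine ⟨⟨hA, hfc⟩, by simp [hff], fun h => ?_, Or.inl ⟨rfl, hadj⟩⟩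
  have := congrArg Prod.snd h
  dsimp only at this
  omega

theorem tileable_Ico_prod_of_even {i k : ℕ} (hik : Even (k - i)) (B : Set ℕ) :
    Tileable (Ico i k ×ˢ B) := by
  obtain ⟨f, hf⟩ := exists_involution_Ico hik
  refine ⟨fun c => (f c.1, c.2), fun c ⟨hc, hB⟩ => ?_⟩
  obtain ⟨hfc, hff, hadj⟩ := hf c.1 hc
  refine ⟨⟨hfc, hB⟩, by simp [hff], fun h => ?_, Or.inr ⟨rfl, hadj⟩⟩
  have := congrArg Prod.fst h
  dsimp only at this
  omega

def diagramFrom : ℕ → List ℕ → Set (ℕ × ℕ)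
  | _, [] => ∅
  | r, a :: l => {r} ×ˢ Iio a ∪ diagramFrom (r + 1) l

theorem mem_diagramFrom {r : ℕ} {l : List ℕ} {c : ℕ × ℕ} :
    c ∈ diagramFrom r l ↔ r ≤ c.1 ∧ c.2 < l.getD (c.1 - r) 0 := by
  induction l generalizing r with
  | nil => simp [diagramFrom]
  | cons a l ih =>
    obtain ⟨i, j⟩ := c
    simp only [diagramFrom, mem_union, mem_prod, mem_singleton_iff, mem_Iio, ih]
    rcases Nat.lt_trichotomy i r with h | rfl | h
    · simp only [Order.add_one_le_iff]
      omega
    · simp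
    · obtain ⟨d, rfl⟩ : ∃ d, i = r + 1 + d := ⟨i - (r + 1), by omega⟩
      simp [show r + 1 + d - r = d + 1 by omega, show r + 1 + d ≠ r by omega,
        show r ≤ r + 1 + d by omega]

theorem diagramFrom_zero (l : List ℕ) : diagramFrom 0 l = {c | Cell l c} := by
  ext c
  simp [mem_diagramFrom, Cell]

theorem disjoint_diagramFrom {s : Set (ℕ × ℕ)} {r : ℕ} (hs : ∀ c ∈ s, c.1 < r) (l : List ℕ) :
    Disjoint s (diagramFrom r l) :=
  disjoint_left.2 fun c hc hc' => (hs c hc).not_ge (mem_diagramFrom.1 hc').1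

theorem Iio_disjoint_Ico {α : Type*} [Preorder α] (a b : α) : Disjoint (Iio a) (Ico a b) :=
  (Iio_disjoint_Ici le_rfl).mono_right Ico_subset_Ici_self

theorem tileable_empty : Tileable ∅ := ⟨id, by simp⟩

/-- `diagramFrom r (1 :: l)` is the diagram of `l` starting at row `r + 1`, plus the cell
`(r, 0)` above it. -/
def PaddedTileable (l : List ℕ) : Prop :=
  ∀ r, (Even l.sum → Tileable (diagramFrom r l)) ∧
    (Odd l.sum → Tileable (diagramFrom r (1 :: l)))

theorem PaddedTileable.nil : PaddedTileable [] :=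
  fun _ => ⟨fun _ => tileable_empty, fun h => absurd h (by simp)⟩

theorem PaddedTileable.cons_of_odd {a : ℕ} {l : List ℕ} (ha : Odd a) (h : PaddedTileable l) :
    PaddedTileable (a :: l) := by
  rw [Nat.odd_iff] at ha
  have hrow : ∀ r, Tileable ({r} ×ˢ Ico 1 a) :=
    fun _ => tileable_prod_Ico_of_even _ (by rw [Nat.even_iff]; omega)
  intro r
  constructor
  · intro hsum
    have hl : Odd l.sum := by rw [List.sum_cons, Nat.even_iff] at hsum; rw [Nat.odd_iff]; omega
    have hsplit : diagramFrom r (a :: l) = {r} ×ˢ Ico 1 a ∪ diagramFrom r (1 :: l) := by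
      ext ⟨i, j⟩
      simp only [diagramFrom, mem_union, mem_prod, mem_singleton_iff, mem_Iio, mem_Ico]
      grind
    have hdisj : Disjoint ({r} ×ˢ Ico 1 a) (diagramFrom r (1 :: l)) :=
      disjoint_union_right.2 ⟨disjoint_prod.2 (Or.inr (Iio_disjoint_Ico 1 a).symm),
        disjoint_diagramFrom (fun c hc => by simp_all) l⟩
    rw [hsplit]
    exact (hrow r).union ((h r).2 hl) hdisj
  · intro hsum
    have hl : Even l.sum := by rw [List.sum_cons, Nat.odd_iff] at hsum; rw [Nat.even_iff]; omega
    have hsplit : diagramFrom r (1 :: a :: l) =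
        Ico r (r + 2) ×ˢ Iio 1 ∪ ({r + 1} ×ˢ Ico 1 a ∪ diagramFrom (r + 2) l) := by
      ext ⟨i, j⟩
      simp only [diagramFrom, mem_union, mem_prod, mem_singleton_iff, mem_Iio, mem_Ico]
      grind
    have hlower : Tileable ({r + 1} ×ˢ Ico 1 a ∪ diagramFrom (r + 2) l) :=
      (hrow (r + 1)).union ((h (r + 2)).1 hl) (disjoint_diagramFrom (fun c hc => by simp_all) l)
    have hdisj : Disjoint (Ico r (r + 2) ×ˢ Iio 1) ({r + 1} ×ˢ Ico 1 a ∪ diagramFrom (r + 2) l) :=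
      disjoint_union_right.2 ⟨disjoint_prod.2 (Or.inr (Iio_disjoint_Ico 1 a)),
        disjoint_diagramFrom (fun c hc => hc.1.2) l⟩
    rw [hsplit]
    exact (tileable_Ico_prod_of_even (by simp) _).union hlower hdisj

theorem PaddedTileable.cons_cons {a : ℕ} {l : List ℕ} (ha : 0 < a) (h : PaddedTileable l) :
    PaddedTileable (a :: a :: l) := by
  have hsum : (a :: a :: l).sum = l.sum + 2 * a := by simp only [List.sum_cons]; ring
  intro r
  constructor
  · intro heven
    have hl : Even l.sum := by rw [hsum, Nat.even_iff] at heven; rw [Nat.even_iff]; omega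
    have hsplit :
        diagramFrom r (a :: a :: l) = Ico r (r + 2) ×ˢ Iio a ∪ diagramFrom (r + 2) l := by
      ext ⟨i, j⟩
      simp only [diagramFrom, mem_union, mem_prod, mem_singleton_iff, mem_Iio, mem_Ico]
      grind
    rw [hsplit]
    exact (tileable_Ico_prod_of_even (by simp) _).union ((h (r + 2)).1 hl)
      (disjoint_diagramFrom (fun c hc => hc.1.2) l)
  · intro hodd
    have hl : Odd l.sum := by rw [hsum, Nat.odd_iff] at hodd; rw [Nat.odd_iff]; omega
    have hsplit : diagramFrom r (1 :: a :: a :: l) = Ico r (r + 2) ×ˢ Iio 1 ∪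
        (Ico (r + 1) (r + 3) ×ˢ Ico 1 a ∪ diagramFrom (r + 2) (1 :: l)) := by
      ext ⟨i, j⟩
      simp only [diagramFrom, mem_union, mem_prod, mem_singleton_iff, mem_Iio, mem_Ico]
      grind
    have hlower : Tileable (Ico (r + 1) (r + 3) ×ˢ Ico 1 a ∪ diagramFrom (r + 2) (1 :: l)) :=
      (tileable_Ico_prod_of_even (by simp) _).union ((h (r + 2)).2 hl)
        (disjoint_union_right.2 ⟨disjoint_prod.2 (Or.inr (Iio_disjoint_Ico 1 a).symm),
          disjoint_diagramFrom (fun c hc => hc.1.2) l⟩)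
    have hdisj : Disjoint (Ico r (r + 2) ×ˢ Iio 1)
        (Ico (r + 1) (r + 3) ×ˢ Ico 1 a ∪ diagramFrom (r + 2) (1 :: l)) :=
      disjoint_union_right.2 ⟨disjoint_prod.2 (Or.inr (Iio_disjoint_Ico 1 a)),
        disjoint_diagramFrom (fun c hc => hc.1.2) _⟩
    rw [hsplit]
    exact (tileable_Ico_prod_of_even (by simp) _).union hlower hdisj

theorem eq_of_mem_of_pairwise_ge {α : Type*} [PartialOrder α] {a b : α} {l : List α}
    (hs : (a :: b :: l).Pairwise (· ≥ ·)) (ha : a ∈ b :: l) : b = a := by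
  rcases List.mem_cons.1 ha with rfl | ha
  · rfl
  · exact le_antisymm (List.rel_of_pairwise_cons hs List.mem_cons_self)
      (List.rel_of_pairwise_cons hs.of_cons ha)

theorem paddedTileable_of_even_count : ∀ (l : List ℕ), l.Pairwise (· ≥ ·) → (∀ x ∈ l, 0 < x) →
    (∀ m ∈ l, Even m → Even (l.count m)) → PaddedTileable l
  | [], _, _, _ => .nil
  | a :: l, hs, hpos, hD => by
    rcases Nat.even_or_odd a with ha | ha
    · have hmem : a ∈ l := by
        have := hD a List.mem_cons_self ha
        rw [List.count_cons_self, Nat.even_add_one] at this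
        exact List.count_pos_iff.1 (Nat.not_even_iff_odd.1 this).pos
      obtain ⟨l, rfl⟩ : ∃ l', l = a :: l' := by
        cases l with
        | nil => simp at hmem
        | cons b l => exact ⟨l, by rw [eq_of_mem_of_pairwise_ge hs hmem]⟩
      refine (paddedTileable_of_even_count l hs.of_cons.of_cons
        (fun x hx => hpos x (by simp [hx])) (fun m hm hme => ?_)).cons_cons (hpos a (by simp))
      have := hD m (by simp [hm]) hme
      by_cases hne : a = m <;> simpa [List.count_cons, hne, Nat.even_add_one] using this
    · refine (paddedTileable_of_even_count l hs.of_cons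
        (fun x hx => hpos x (by simp [hx])) (fun m hm hme => ?_)).cons_of_odd ha
      have hne : a ≠ m := by rintro rfl; exact Nat.not_even_iff_odd.2 ha hme
      simpa [List.count_cons, hne] using hD m (by simp [hm]) hme

theorem hasTiling_of_even_count {l : List ℕ} (hs : l.Pairwise (· ≥ ·)) (hpos : ∀ x ∈ l, 0 < x)
    (hsum : Even l.sum) (hD : ∀ m ∈ l, Even m → Even (l.count m)) : HasTiling l := by
  have := (paddedTileable_of_even_count l hs hpos hD 0).1 hsum
  rwa [diagramFrom_zero] at this

/-- A partition `p` of `2n` in which every even part occurs with even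
multiplicity (a D-partition) has empty 2-core, i.e. its Young diagram can be tiled by
dominoes. -/
theorem D_partition_tileable (n : ℕ) (p : (2 * n).Partition)
    (hD : ∀ m ∈ p.parts, Even m → Even (p.parts.count m)) :
    HasTiling (partList p) := by
  have hmem : ∀ m, m ∈ partList p ↔ m ∈ p.parts := by simp [partList]
  have hcount : ∀ m, (partList p).count m = p.parts.count m := by
    simp [partList, ← Multiset.coe_count]
  refine hasTiling_of_even_count ?_ (fun x hx => p.parts_pos ((hmem x).1 hx)) ?_
    (fun m hm hme => hcount m ▸ hD m ((hmem m).1 hm) hme)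
  · exact List.pairwise_reverse.2 (Multiset.pairwise_sort p.parts (· ≤ ·))
  · rw [partList, List.sum_reverse, ← Multiset.sum_coe, Multiset.sort_eq, p.parts_sum]
    exact even_two_mul n
end

section
/- If p is a very even partition of 2n (all parts even with even multiplicities), then n_v mod 4 distinguishes standard domino tableaux of shape p into exactly two nonempty classes: those with number of vertical dominoes ≡ 0 mod 4 and those with ≡ 2 mod 4; in particular, the number of vertical dominoes in any standard domino tableau of very even shape is even. -/
/-!
Count the cells lying in even-numbered rows. Every row has even length, so there is an even
number of them; a horizontal domino covers two or none of them and a vertical one exactly one,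
so `n_v` is even. Both residues mod 4 occur: tiling every row by horizontal dominoes in reading
order gives `n_v = 0`, and since every part occurs at least twice the first two rows have length
at least `2`, so the top-left `2 × 2` square can be covered by two vertical dominoes instead,
giving `n_v = 2`.
-/

open scoped Classical

open Finset

section Shape

variable {l : List ℕ}

lemma antitone_getD (hs : l.Pairwise (· ≥ ·)) : Antitone (l.getD · 0) := by
  intro i j hij
  change l.getD j 0 ≤ l.getD i 0
  rcases lt_or_ge j l.length with hj | hj
  · rw [List.getD_eq_getElem _ _ hj, List.getD_eq_getElem _ _ (hij.trans_lt hj)]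
    rcases hij.eq_or_lt with rfl | hlt
    · exact le_rfl
    · exact List.pairwise_iff_getElem.mp hs i j _ hj hlt
  · rw [List.getD_eq_default _ _ hj]; exact Nat.zero_le _

lemma Cell.of_le (hs : l.Pairwise (· ≥ ·)) {x y : ℕ × ℕ} (hyx : y ≤ x) (hx : Cell l x) :
    Cell l y :=
  calc y.2 ≤ x.2 := hyx.2
    _ < l.getD x.1 0 := hx
    _ ≤ l.getD y.1 0 := antitone_getD hs hyx.1

lemma even_getD (he : ∀ x ∈ l, Even x) (i : ℕ) : Even (l.getD i 0) := by
  rcases lt_or_ge i l.length with h | h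
  · rw [List.getD_eq_getElem _ _ h]; exact he _ (List.getElem_mem h)
  · rw [List.getD_eq_default _ _ h]; exact ⟨0, rfl⟩

def rowStart (l : List ℕ) (i : ℕ) : ℕ := (l.take i).sum

@[simp] lemma rowStart_zero : rowStart l 0 = 0 := rfl

lemma rowStart_succ (i : ℕ) : rowStart l (i + 1) = rowStart l i + l.getD i 0 := by
  rw [rowStart, rowStart, List.take_add_one, List.sum_append]
  cases h : l[i]? <;> simp [h]

lemma rowStart_mono : Monotone (rowStart l) :=
  monotone_nat_of_le_succ fun i => by rw [rowStart_succ]; omega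

lemma rowStart_le_sum (i : ℕ) : rowStart l i ≤ l.sum := by
  rw [rowStart, ← List.take_append_drop i l, List.sum_append, List.take_append_drop]
  omega

lemma even_rowStart (he : ∀ x ∈ l, Even x) (i : ℕ) : Even (rowStart l i) :=
  even_iff_two_dvd.mpr <| List.dvd_sum fun x hx => (he x (List.mem_of_mem_take hx)).two_dvd

lemma exists_rowStart_le_lt {m : ℕ} (hm : m < l.sum) :
    ∃ i, rowStart l i ≤ m ∧ m < rowStart l (i + 1) := by
  induction l generalizing m with
  | nil => simp at hm
  | cons a t ih =>
    have hstart (i : ℕ) : rowStart (a :: t) (i + 1) = a + rowStart t i := by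
      simp [rowStart]
    rcases lt_or_ge m a with hma | hma
    · exact ⟨0, by simp, by simpa [hstart] using hma⟩
    · obtain ⟨i, h1, h2⟩ := ih (m := m - a) (by simp at hm; omega)
      exact ⟨i + 1, by rw [hstart]; omega, by rw [hstart]; omega⟩

lemma rowStart_add_lt_rowStart {x : ℕ × ℕ} (hx : Cell l x) :
    rowStart l x.1 + x.2 < rowStart l (x.1 + 1) := by
  rw [rowStart_succ]; exact Nat.add_lt_add_left hx _

def cells (l : List ℕ) : Finset (ℕ × ℕ) :=
  (range l.length).biUnion fun i => {i} ×ˢ range (l.getD i 0)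

lemma mem_cells {x : ℕ × ℕ} : x ∈ cells l ↔ Cell l x := by
  simp only [cells, mem_biUnion, mem_range, mem_product,
    mem_singleton, Cell]
  constructor
  · rintro ⟨i, -, rfl, h⟩; exact h
  · intro h
    refine ⟨x.1, ?_, rfl, h⟩
    by_contra hx
    rw [List.getD_eq_default _ _ (not_lt.mp hx)] at h
    exact Nat.not_lt_zero _ h

lemma card_filter_cells (P : ℕ → Prop) [DecidablePred P] :
    #{x ∈ cells l | P x.1} = ∑ i ∈ range l.length with P i, l.getD i 0 := by
  rw [cells, filter_biUnion, card_biUnion, sum_filter]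
  · refine sum_congr rfl fun i _ => ?_
    rw [filter_product_left, filter_singleton]
    split_ifs <;> simp
  · intro i _ j _ hij
    simp only [disjoint_left, mem_filter, mem_product, mem_singleton]
    rintro x ⟨⟨rfl, -⟩, -⟩ ⟨⟨h, -⟩, -⟩
    exact hij h

lemma sum_range_getD (l : List ℕ) : ∑ i ∈ range l.length, l.getD i 0 = l.sum := by
  induction l with
  | nil => rfl
  | cons a t ih =>
    rw [List.length_cons, sum_range_succ']
    simp only [List.getD_cons_succ, List.getD_cons_zero, List.sum_cons, ih, add_comm]

lemma card_cells : #(cells l) = l.sum := by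
  have h := card_filter_cells (l := l) (fun _ => True)
  simp only [filter_true] at h
  rw [h, sum_range_getD]

end Shape

section Counting

variable {α β : Type*} [DecidableEq β] {s : Finset α} {t : Finset β} {f : α → β} {m : ℕ}

lemma card_fiber_eq_of_le (hf : ∀ x ∈ s, f x ∈ t) (hs : #s = m * #t)
    (hle : ∀ b ∈ t, m ≤ #{x ∈ s | f x = b}) : ∀ b ∈ t, #{x ∈ s | f x = b} = m := by
  have hsum : ∑ _b ∈ t, m = ∑ b ∈ t, #{x ∈ s | f x = b} := by
    rw [← card_eq_sum_card_fiberwise hf, sum_const, smul_eq_mul, hs, mul_comm]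
  exact fun b hb => ((sum_eq_sum_iff_of_le hle).mp hsum b hb).symm

lemma mem_of_card_fiber_eq (hs : #s = m * #t) (h : ∀ b ∈ t, #{x ∈ s | f x = b} = m) :
    ∀ x ∈ s, f x ∈ t := by
  have hfiber : ∀ b ∈ t, #{x ∈ {x ∈ s | f x ∈ t} | f x = b} = m := fun b hb => by
    rw [filter_filter, ← h b hb]
    exact congrArg card (filter_congr fun x _ => ⟨And.right, fun hx => ⟨hx ▸ hb, hx⟩⟩)
  refine card_filter_eq_iff.mp ?_
  rw [card_eq_sum_card_fiberwise (s := {x ∈ s | f x ∈ t}) fun x hx => (mem_filter.mp hx).2,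
    sum_congr rfl hfiber, sum_const, smul_eq_mul, hs, mul_comm]

end Counting

lemma Adj.card_filter_even_fst_mod_two {c d : ℕ × ℕ} (h : Adj c d) :
    #{x ∈ ({c, d} : Finset (ℕ × ℕ)) | Even x.1} % 2 = if c.2 = d.2 then 1 else 0 := by
  rw [card_filter, sum_pair h.ne]
  rcases h with ⟨h1, h2 | h2⟩ | ⟨h1, h2 | h2⟩ <;>
    simp only [h1, ← h2, Nat.even_add_one] <;> split_ifs <;> omega

namespace SDT

variable {n : ℕ} (T : SDT n)

def IsVertical (k : ℕ) : Prop :=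
  ∃ i j : ℕ, Cell T.shape (i + 1, j) ∧ T.label (i, j) = k ∧ T.label (i + 1, j) = k

lemma nVert_eq : nVert T = #{k ∈ Icc 1 n | T.IsVertical k} := rfl

lemma card_filter_label_eq {k : ℕ} (hk : k ∈ Icc 1 n) :
    #{x ∈ cells T.shape | T.label x = k} = 2 := by
  obtain ⟨c, d, hne, -, hiff⟩ := T.dominoes k (mem_Icc.mp hk).1 (mem_Icc.mp hk).2
  rw [← card_pair hne]
  congr 1
  ext x
  simpa [mem_cells] using hiff x

lemma label_mem_Icc {x : ℕ × ℕ} (hx : Cell T.shape x) : T.label x ∈ Icc 1 n :=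
  mem_of_card_fiber_eq (by rw [card_cells, T.sum_eq, Nat.card_Icc, Nat.add_sub_cancel])
    (fun _ => T.card_filter_label_eq) x (mem_cells.mpr hx)

lemma isVertical_iff {k : ℕ} {c d : ℕ × ℕ} (hadj : Adj c d)
    (hiff : ∀ x, (Cell T.shape x ∧ T.label x = k) ↔ (x = c ∨ x = d)) :
    T.IsVertical k ↔ c.2 = d.2 := by
  constructor
  · rintro ⟨i, j, hcell, hl, hl'⟩
    have hlow := (hiff (i, j)).mp ⟨hcell.of_le T.sorted (by simp), hl⟩
    have hup := (hiff (i + 1, j)).mp ⟨hcell, hl'⟩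
    rcases hlow with rfl | rfl <;> rcases hup with h | h <;> first | simp at h | (subst h; rfl)
  · intro hcol
    have hc := (hiff c).mpr (Or.inl rfl)
    have hd := (hiff d).mpr (Or.inr rfl)
    obtain ⟨a, b⟩ := c
    obtain ⟨a', b'⟩ := d
    simp only at hcol
    subst hcol
    rcases hadj with ⟨-, h | h⟩ | ⟨-, h | h⟩ <;> simp at h <;> subst h
    · exact ⟨a, b, hd.1, hc.2, hd.2⟩
    · exact ⟨a', b, hc.1, hd.2, hc.2⟩

lemma even_nVert (he : ∀ x ∈ T.shape, Even x) : Even (nVert T) := by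
  set E := {x ∈ cells T.shape | Even x.1}
  have hE : Even #E := by
    rw [card_filter_cells]
    exact even_sum _ fun i _ => even_getD he i
  have hdomino : ∀ k ∈ Icc 1 n,
      #{x ∈ E | T.label x = k} % 2 = if T.IsVertical k then 1 else 0 := by
    intro k hk
    obtain ⟨c, d, -, hadj, hiff⟩ := T.dominoes k (mem_Icc.mp hk).1 (mem_Icc.mp hk).2
    have hEk : {x ∈ E | T.label x = k} = {x ∈ ({c, d} : Finset (ℕ × ℕ)) | Even x.1} := by
      ext x
      simp only [E, mem_filter, mem_cells, ← hiff x, mem_insert, mem_singleton]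
      tauto
    rw [hEk, hadj.card_filter_even_fst_mod_two, if_congr (T.isVertical_iff hadj hiff) rfl rfl]
  have hcount : #E % 2 = nVert T % 2 := by
    rw [card_eq_sum_card_fiberwise fun x hx => T.label_mem_Icc (mem_cells.mp (mem_filter.mp hx).1),
      sum_nat_mod, sum_congr rfl hdomino, ← card_filter, nVert_eq]
  rw [Nat.even_iff, ← hcount, ← Nat.even_iff]
  exact hE

end SDT

/-- Since there are `2n` cells, a label in `1, …, n` carried by two adjacent cells is carried by
no other cell. -/
def SDT.ofLabel {n : ℕ} (l : List ℕ) (hs : l.Pairwise (· ≥ ·)) (hp : ∀ x ∈ l, 0 < x)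
    (hsum : l.sum = 2 * n) (f : ℕ × ℕ → ℕ) (hf : ∀ x, Cell l x → f x ∈ Icc 1 n)
    (hdom : ∀ k ∈ Icc 1 n, ∃ c d, Adj c d ∧ Cell l c ∧ Cell l d ∧ f c = k ∧ f d = k)
    (hmono : ∀ x y, y ≤ x → Cell l x → f y ≤ f x) : SDT n where
  shape := l
  sorted := hs
  pos := hp
  sum_eq := hsum
  label := f
  dominoes k hk1 hk2 := by
    have hpair : ∀ k ∈ Icc 1 n, ∃ c d, Adj c d ∧
        ({c, d} : Finset (ℕ × ℕ)) ⊆ {x ∈ cells l | f x = k} := fun k hk => by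
      obtain ⟨c, d, hadj, hc, hd, hfc, hfd⟩ := hdom k hk
      refine ⟨c, d, hadj, ?_⟩
      simp [insert_subset_iff, mem_cells, hc, hd, hfc, hfd]
    have hcard := card_fiber_eq_of_le (fun x hx => hf x (mem_cells.mp hx))
      (by rw [card_cells, hsum, Nat.card_Icc, Nat.add_sub_cancel])
      (fun k hk => by
        obtain ⟨c, d, hadj, hsub⟩ := hpair k hk
        simpa [card_pair hadj.ne] using card_le_card hsub)
    have hk : k ∈ Icc 1 n := mem_Icc.mpr ⟨hk1, hk2⟩
    obtain ⟨c, d, hadj, hsub⟩ := hpair k hk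
    have heq := eq_of_subset_of_card_le hsub (by rw [hcard k hk, card_pair hadj.ne])
    refine ⟨c, d, hadj.ne, hadj, fun x => ?_⟩
    simpa [← mem_cells (l := l)] using congrArg (x ∈ ·) heq.symm
  lower k := by
    rintro x y hyx ⟨hx, hfx⟩
    exact ⟨hx.of_le hs hyx, (hmono x y hyx hx).trans hfx⟩

def rowLabel (l : List ℕ) (x : ℕ × ℕ) : ℕ := (rowStart l x.1 + x.2) / 2 + 1

section RowLabel

variable {l : List ℕ} {n : ℕ}

lemma rowStart_add_le (hs : l.Pairwise (· ≥ ·)) {x y : ℕ × ℕ} (hyx : y ≤ x)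
    (hx : Cell l x) :
    rowStart l y.1 + y.2 ≤ rowStart l x.1 + x.2 := by
  rcases hyx.1.eq_or_lt with h | h
  · rw [h]; exact Nat.add_le_add_left hyx.2 _
  · calc rowStart l y.1 + y.2 ≤ rowStart l (y.1 + 1) :=
          (rowStart_add_lt_rowStart (hx.of_le hs hyx)).le
      _ ≤ rowStart l x.1 := rowStart_mono h
      _ ≤ rowStart l x.1 + x.2 := Nat.le_add_right _ _

lemma rowLabel_mono (hs : l.Pairwise (· ≥ ·)) (x y : ℕ × ℕ) (hyx : y ≤ x)
    (hx : Cell l x) : rowLabel l y ≤ rowLabel l x :=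
  Nat.add_le_add_right (Nat.div_le_div_right (rowStart_add_le hs hyx hx)) 1

lemma rowLabel_mem_Icc (hsum : l.sum = 2 * n) (x : ℕ × ℕ) (hx : Cell l x) :
    rowLabel l x ∈ Icc 1 n := by
  have := (rowStart_add_lt_rowStart hx).trans_le (rowStart_le_sum _)
  simp only [mem_Icc, rowLabel]
  omega

/-- Rows have even length and start at even positions, so cells `2k - 2` and `2k - 1` in reading
order lie side by side in one row. -/
lemma exists_rowLabel_domino (he : ∀ x ∈ l, Even x) (hsum : l.sum = 2 * n) {k : ℕ}
    (hk : k ∈ Icc 1 n) :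
    ∃ i j, Cell l (i, j + 1) ∧ rowLabel l (i, j) = k ∧ rowLabel l (i, j + 1) = k := by
  rw [mem_Icc] at hk
  obtain ⟨i, hi, hi'⟩ := exists_rowStart_le_lt (l := l) (m := 2 * (k - 1)) (by omega)
  rw [rowStart_succ] at hi'
  obtain ⟨r, hr⟩ := even_rowStart he i
  obtain ⟨w, hw⟩ := even_getD he i
  refine ⟨i, 2 * (k - 1) - rowStart l i, ?_, ?_, ?_⟩ <;> simp only [Cell, rowLabel] <;> omega

lemma exists_adj_rowLabel (hs : l.Pairwise (· ≥ ·)) (he : ∀ x ∈ l, Even x)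
    (hsum : l.sum = 2 * n) (k : ℕ) (hk : k ∈ Icc 1 n) :
    ∃ c d, Adj c d ∧ Cell l c ∧ Cell l d ∧ rowLabel l c = k ∧ rowLabel l d = k := by
  obtain ⟨i, j, hcell, hc, hd⟩ := exists_rowLabel_domino he hsum hk
  exact ⟨(i, j), (i, j + 1), Or.inl ⟨rfl, Or.inl rfl⟩, hcell.of_le hs (by simp), hcell,
    hc, hd⟩

lemma rowLabel_lt_of_cell_succ (hs : l.Pairwise (· ≥ ·)) (he : ∀ x ∈ l, Even x) {i j : ℕ}
    (hcell : Cell l (i + 1, j)) : rowLabel l (i, j) < rowLabel l (i + 1, j) := by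
  have hrow : l.getD (i + 1) 0 ≤ l.getD i 0 := antitone_getD hs (Nat.le_succ i)
  obtain ⟨r, hr⟩ := even_getD he i
  simp only [Cell, rowLabel, rowStart_succ] at hcell ⊢
  omega

end RowLabel

def rowTableau {n : ℕ} (l : List ℕ) (hs : l.Pairwise (· ≥ ·)) (hp : ∀ x ∈ l, 0 < x)
    (he : ∀ x ∈ l, Even x) (hsum : l.sum = 2 * n) : SDT n :=
  SDT.ofLabel l hs hp hsum (rowLabel l) (rowLabel_mem_Icc hsum) (exists_adj_rowLabel hs he hsum)
    (rowLabel_mono hs)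

lemma nVert_rowTableau {n : ℕ} (l : List ℕ) (hs : l.Pairwise (· ≥ ·))
    (hp : ∀ x ∈ l, 0 < x) (he : ∀ x ∈ l, Even x) (hsum : l.sum = 2 * n) :
    nVert (rowTableau l hs hp he hsum) = 0 := by
  rw [SDT.nVert_eq, card_eq_zero, filter_eq_empty_iff]
  rintro k - ⟨i, j, hcell, hk, hk'⟩
  exact (rowLabel_lt_of_cell_succ hs he hcell).ne (hk.trans hk'.symm)

/-- The reading-order labelling with the top-left `2 × 2` square relabelled by two vertical
dominoes `1` and `2`; the rest of row `0` shifts up by one to make room. -/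
def cornerLabel (l : List ℕ) (x : ℕ × ℕ) : ℕ :=
  if x.1 ≤ 1 ∧ x.2 ≤ 1 then x.2 + 1
  else if x.1 = 0 then rowLabel l x + 1
  else rowLabel l x

section CornerLabel

variable {l : List ℕ} {n : ℕ}

lemma rowStart_cases (i : ℕ) :
    (i = 0 ∧ rowStart l i = 0) ∨ (i = 1 ∧ rowStart l i = l.getD 0 0) ∨
      (2 ≤ i ∧ l.getD 0 0 + l.getD 1 0 ≤ rowStart l i) := by
  rcases i with _ | _ | i
  · exact Or.inl ⟨rfl, rfl⟩
  · exact Or.inr (Or.inl ⟨rfl, by simp [rowStart_succ]⟩)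
  · refine Or.inr (Or.inr ⟨by omega, ?_⟩)
    calc l.getD 0 0 + l.getD 1 0 = rowStart l 2 := by simp [rowStart_succ]
      _ ≤ rowStart l (i + 2) := rowStart_mono (by omega)

lemma getD_zero_add_getD_one_le_sum : l.getD 0 0 + l.getD 1 0 ≤ l.sum := by
  simpa [rowStart_succ] using rowStart_le_sum (l := l) 2

lemma cornerLabel_mono (hs : l.Pairwise (· ≥ ·)) (he : ∀ x ∈ l, Even x)
    (hcorner : 2 ≤ l.getD 1 0) (x y : ℕ × ℕ) (hyx : y ≤ x) (hx : Cell l x) :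
    cornerLabel l y ≤ cornerLabel l x := by
  have hrow := rowLabel_mono hs x y hyx hx
  have hab : l.getD 1 0 ≤ l.getD 0 0 := antitone_getD hs zero_le_one
  obtain ⟨a, ha⟩ := even_getD he 0
  obtain ⟨i, j⟩ := x
  obtain ⟨i', j'⟩ := y
  obtain ⟨hi, hj⟩ := Prod.mk_le_mk.mp hyx
  rcases rowStart_cases (l := l) i with ⟨hi0, h⟩ | ⟨hi0, h⟩ | ⟨hi0, h⟩ <;>
    rcases rowStart_cases (l := l) i' with ⟨hi0', h'⟩ | ⟨hi0', h'⟩ | ⟨hi0', h'⟩ <;>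
    simp only [cornerLabel, rowLabel] at hrow ⊢ <;> split_ifs <;> omega

lemma cornerLabel_mem_Icc (hs : l.Pairwise (· ≥ ·)) (he : ∀ x ∈ l, Even x)
    (hcorner : 2 ≤ l.getD 1 0) (hsum : l.sum = 2 * n) (x : ℕ × ℕ) (hx : Cell l x) :
    cornerLabel l x ∈ Icc 1 n := by
  have hrow := mem_Icc.mp (rowLabel_mem_Icc hsum x hx)
  have hab : l.getD 1 0 ≤ l.getD 0 0 := antitone_getD hs zero_le_one
  have htwo := getD_zero_add_getD_one_le_sum (l := l)
  obtain ⟨a, ha⟩ := even_getD he 0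
  obtain ⟨i, j⟩ := x
  simp only [Cell] at hx
  simp only [mem_Icc, cornerLabel, rowLabel] at hrow ⊢
  split_ifs with h1 h2
  · omega
  · subst h2; simp only [rowStart_zero] at hrow ⊢; omega
  · omega

lemma exists_adj_cornerLabel (hs : l.Pairwise (· ≥ ·)) (he : ∀ x ∈ l, Even x)
    (hcorner : 2 ≤ l.getD 1 0) (hsum : l.sum = 2 * n) (k : ℕ) (hk : k ∈ Icc 1 n) :
    ∃ c d, Adj c d ∧ Cell l c ∧ Cell l d ∧ cornerLabel l c = k ∧ cornerLabel l d = k := by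
  have hab : l.getD 1 0 ≤ l.getD 0 0 := antitone_getD hs zero_le_one
  obtain ⟨a, ha⟩ := even_getD he 0
  have hk' := mem_Icc.mp hk
  rcases lt_or_ge k 3 with hk3 | hk3
  · refine ⟨(0, k - 1), (1, k - 1), Or.inr ⟨rfl, Or.inl rfl⟩, ?_⟩
    simp only [Cell, cornerLabel]
    split_ifs <;> omega
  rcases le_or_gt k (l.getD 0 0 / 2 + 1) with hrow0 | hrow0
  · refine ⟨(0, 2 * k - 4), (0, 2 * k - 3), Or.inl ⟨rfl, Or.inl (by omega)⟩, ?_⟩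
    simp only [Cell, cornerLabel, rowLabel, rowStart_zero]
    split_ifs <;> omega
  · obtain ⟨i, j, hcell, hc, hd⟩ := exists_rowLabel_domino he hsum hk
    refine ⟨(i, j), (i, j + 1), Or.inl ⟨rfl, Or.inl rfl⟩, hcell.of_le hs (by simp), hcell,
      ?_⟩
    have hrow : l.getD i 0 ≤ l.getD 0 0 := antitone_getD hs (Nat.zero_le i)
    simp only [Cell] at hcell
    rcases rowStart_cases (l := l) i with ⟨hi0, h⟩ | ⟨hi0, h⟩ | ⟨hi0, h⟩ <;>
      simp only [cornerLabel, rowLabel] at hc hd ⊢ <;> split_ifs <;> omega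

lemma isVertical_cornerLabel_iff (hs : l.Pairwise (· ≥ ·)) (he : ∀ x ∈ l, Even x)
    (hcorner : 2 ≤ l.getD 1 0) {k : ℕ} :
    (∃ i j, Cell l (i + 1, j) ∧ cornerLabel l (i, j) = k ∧ cornerLabel l (i + 1, j) = k) ↔
      k = 1 ∨ k = 2 := by
  have hab : l.getD 1 0 ≤ l.getD 0 0 := antitone_getD hs zero_le_one
  obtain ⟨a, ha⟩ := even_getD he 0
  constructor
  · rintro ⟨i, j, hcell, hk, hk'⟩
    have hlt := rowLabel_lt_of_cell_succ hs he hcell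
    have hrow : l.getD (i + 1) 0 ≤ l.getD 1 0 := antitone_getD hs (Nat.le_add_left 1 i)
    simp only [Cell] at hcell
    rcases rowStart_cases (l := l) i with ⟨hi0, h⟩ | ⟨hi0, h⟩ | ⟨hi0, h⟩ <;>
      rcases rowStart_cases (l := l) (i + 1) with
        ⟨hi0', h'⟩ | ⟨hi0', h'⟩ | ⟨hi0', h'⟩ <;>
      simp only [cornerLabel, rowLabel] at hk hk' hlt <;>
      split_ifs at hk hk' <;> omega
  · intro hk
    refine ⟨0, k - 1, by simp only [Cell, zero_add]; omega, ?_, ?_⟩ <;>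
      simp only [cornerLabel] <;> split_ifs <;> omega

end CornerLabel

def cornerTableau {n : ℕ} (l : List ℕ) (hs : l.Pairwise (· ≥ ·)) (hp : ∀ x ∈ l, 0 < x)
    (he : ∀ x ∈ l, Even x) (hcorner : 2 ≤ l.getD 1 0) (hsum : l.sum = 2 * n) : SDT n :=
  SDT.ofLabel l hs hp hsum (cornerLabel l) (cornerLabel_mem_Icc hs he hcorner hsum)
    (exists_adj_cornerLabel hs he hcorner hsum) (cornerLabel_mono hs he hcorner)

lemma nVert_cornerTableau {n : ℕ} (l : List ℕ) (hs : l.Pairwise (· ≥ ·))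
    (hp : ∀ x ∈ l, 0 < x) (he : ∀ x ∈ l, Even x) (hcorner : 2 ≤ l.getD 1 0)
    (hsum : l.sum = 2 * n) :
    nVert (cornerTableau l hs hp he hcorner hsum) = 2 := by
  have hn : 2 ≤ n := by
    have := getD_zero_add_getD_one_le_sum (l := l)
    have : l.getD 1 0 ≤ l.getD 0 0 := antitone_getD hs zero_le_one
    omega
  rw [SDT.nVert_eq]
  convert card_pair (show (1 : ℕ) ≠ 2 by decide)
  ext k
  simp only [mem_filter, mem_Icc, mem_insert, mem_singleton]
  exact ⟨fun h => (isVertical_cornerLabel_iff hs he hcorner).mp h.2,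
    fun h => ⟨by omega, (isVertical_cornerLabel_iff hs he hcorner).mpr h⟩⟩

section PartList

variable {N : ℕ} (p : N.Partition)

lemma pairwise_partList : (partList p).Pairwise (· ≥ ·) :=
  List.pairwise_reverse.mpr (Multiset.pairwise_sort p.parts (· ≤ ·))

variable {p} in
lemma mem_partList {x : ℕ} : x ∈ partList p ↔ x ∈ p.parts := by
  rw [partList, List.mem_reverse, Multiset.mem_sort]

lemma sum_partList : (partList p).sum = N := by
  rw [partList, List.sum_reverse, ← Multiset.sum_coe, Multiset.sort_eq, p.parts_sum]

lemma length_partList : (partList p).length = Multiset.card p.parts := by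
  rw [partList, List.length_reverse, Multiset.length_sort]

/-- Every multiplicity is at least `2`, so there are at least two rows. -/
lemma two_le_getD_one_partList (hN : 0 < N) (heven : ∀ m ∈ p.parts, Even m)
    (hmult : ∀ m ∈ p.parts, Even (p.parts.count m)) : 2 ≤ (partList p).getD 1 0 := by
  obtain ⟨a, ha⟩ := Multiset.exists_mem_of_ne_zero (s := p.parts) fun h => by
    have := p.parts_sum
    rw [h, Multiset.sum_zero] at this
    omega
  have hcount : 2 ≤ p.parts.count a := by
    obtain ⟨c, hc⟩ := hmult a ha
    have := Multiset.count_pos.mpr ha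
    omega
  have hlen : 1 < (partList p).length := by
    rw [length_partList]
    exact hcount.trans (Multiset.count_le_card a p.parts)
  have hmem : (partList p)[1] ∈ p.parts := mem_partList.mp (List.getElem_mem hlen)
  obtain ⟨c, hc⟩ := heven _ hmem
  have := p.parts_pos hmem
  rw [List.getD_eq_getElem _ _ hlen]
  omega

end PartList

/-- If `p` is a very even partition of `2n` (all parts even, each with even
multiplicity), then every standard domino tableau of shape `p` has an even number of vertical
dominoes, and the residue of this number mod 4 splits such tableaux into exactly two nonempty
classes: those with `n_v ≡ 0 (mod 4)` and those with `n_v ≡ 2 (mod 4)`. -/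
theorem very_even_vertical_domino_classes (n : ℕ) (hn : 0 < n) (p : (2 * n).Partition)
    (heven : ∀ m ∈ p.parts, Even m)
    (hmult : ∀ m ∈ p.parts, Even (p.parts.count m)) :
    (∀ T : SDT n, T.shape = partList p → Even (nVert T)) ∧
    (∃ T : SDT n, T.shape = partList p ∧ nVert T % 4 = 0) ∧
    (∃ T : SDT n, T.shape = partList p ∧ nVert T % 4 = 2) := by
  have hs := pairwise_partList p
  have hp : ∀ x ∈ partList p, 0 < x := fun x hx => p.parts_pos (mem_partList.mp hx)
  have he : ∀ x ∈ partList p, Even x := fun x hx => heven x (mem_partList.mp hx)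
  have hcorner := two_le_getD_one_partList p (by omega) heven hmult
  refine ⟨fun T hT => T.even_nVert (hT ▸ he), ?_, ?_⟩
  · exact ⟨rowTableau _ hs hp he (sum_partList p), rfl, by rw [nVert_rowTableau]⟩
  · exact ⟨cornerTableau _ hs hp he hcorner (sum_partList p), rfl, by rw [nVert_cornerTableau]⟩
end
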